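/- Let A ∈ ℝ^{m×n}, ω ∈ ℝ^m with ‖ω‖₂ ≤ δ, x⋆ ∈ ℝⁿ with ‖x⋆‖₀ ≤ s, y = A x⋆ + ω, and μ > 0. Suppose the iterates satisfy Card(supp(x_t) \ supp(x⋆)) < s, Card(supp(x_{t+1}) \ supp(x⋆)) < s, and ‖x_t − x⋆‖₂ ≤ Δ_t, where x_{t+1} = argmin_x { λ_t μ ‖x‖₁ + ½‖x − (x_t − μ Aᵀ(A x_t − y))‖₂² } with λ_t = (ξ_s δ + ρ_{s,2s} Δ_t/μ)/√s. Then ‖x_{t+1} − x⋆‖₂ ≤ 2 ρ_{2s,2s} Δ_t + 2 ξ_{2s} μ δ. -/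

import Mathlib

open MeasureTheory ProbabilityTheory

noncomputable section

/-- Euclidean dot product on `Fin n → ℝ`. -/
def dotp {n : ℕ} (x y : Fin n → ℝ) : ℝ := ∑ i, x i * y i

/-- Euclidean (ℓ₂) norm. -/
def l2norm {n : ℕ} (x : Fin n → ℝ) : ℝ := Real.sqrt (∑ i, x i ^ 2)

/-- ℓ₁ norm. -/
def l1norm {n : ℕ} (x : Fin n → ℝ) : ℝ := ∑ i, |x i|

/-- Support of a vector as a finite set. -/
def suppF {n : ℕ} (x : Fin n → ℝ) : Finset (Fin n) :=
  Finset.univ.filter (fun i => x i ≠ 0)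

/-- ℓ₀ "norm": number of nonzero entries. -/
def l0 {n : ℕ} (x : Fin n → ℝ) : ℕ := (suppF x).card

/-- The Euclidean unit sphere `S^{n-1}`. -/
def unitSphere (n : ℕ) : Set (Fin n → ℝ) := {x | l2norm x = 1}

/-- The set of `s`-sparse vectors. -/
def sparseSet (n s : ℕ) : Set (Fin n → ℝ) := {x | l0 x ≤ s}

/-- Matrix-vector product, viewing `A : Fin m → Fin n → ℝ` as the rows of a matrix. -/
def mvec {m n : ℕ} (A : Fin m → Fin n → ℝ) (x : Fin n → ℝ) : Fin m → ℝ := fun i => dotp (A i) x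

/-- Transposed matrix-vector product `Aᵀ y`. -/
def tmvec {m n : ℕ} (A : Fin m → Fin n → ℝ) (y : Fin m → ℝ) : Fin n → ℝ := fun j => ∑ i, A i j * y i

/-- Restricted singular value `ρ(P,Q) = sup_{v∈P,u∈Q} ⟨v, (I - μ AᵀA) u⟩`. -/
def rsRho {m n : ℕ} (A : Fin m → Fin n → ℝ) (μ : ℝ) (P Q : Set (Fin n → ℝ)) : ℝ :=
  sSup {t | ∃ v ∈ P, ∃ u ∈ Q, t = dotp v (u - μ • tmvec A (mvec A u))}

/-- Restricted singular value `ξ(P) = sup_{v∈P} ⟨v, Aᵀ (w/‖w‖₂)⟩`. -/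
def rsXi {m n : ℕ} (A : Fin m → Fin n → ℝ) (w : Fin m → ℝ) (P : Set (Fin n → ℝ)) : ℝ :=
  sSup {t | ∃ v ∈ P, t = dotp v (tmvec A ((l2norm w)⁻¹ • w))}

/-- Gaussian complexity `γ(C) = E sup_{x ∈ C} |⟨g, x⟩|`, `g ∼ N(0, I_n)`. -/
def gcomp {n : ℕ} (C : Set (Fin n → ℝ)) : ℝ :=
  ∫ g, sSup ((fun x => |dotp g x|) '' C) ∂(Measure.pi fun _ : Fin n => gaussianReal 0 1)

/-- Sub-Gaussian (ψ₂) norm of a real random variable. -/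
def psi2 {Ω : Type*} [MeasureSpace Ω] (Z : Ω → ℝ) : ℝ :=
  sInf {t | 0 < t ∧ ∫ ω, Real.exp (Z ω ^ 2 / t ^ 2) ≤ 2}

/-- Sub-Gaussian (ψ₂) norm of a random vector. -/
def vpsi2 {Ω : Type*} [MeasureSpace Ω] {n : ℕ} (X : Ω → Fin n → ℝ) : ℝ :=
  sSup {t | ∃ u ∈ unitSphere n, t = psi2 (fun ω => dotp (X ω) u)}

/-- A random vector is centered and isotropic. -/
def centIso {Ω : Type*} [MeasureSpace Ω] {n : ℕ} (X : Ω → Fin n → ℝ) : Prop :=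
  (∀ j, ∫ ω, X ω j = 0) ∧ ∀ j k, ∫ ω, X ω j * X ω k = if j = k then (1 : ℝ) else 0

end

/-!
Write `h = x_{t+1} - x⋆` and `b = x_t - μ Aᵀ(A x_t - y)`. As `x_{t+1}` is the proximal point of
the convex function `λ_t μ ‖·‖₁` at `b`, the variational inequality gives
`⟨h, x_{t+1} - b⟩ ≤ λ_t μ (‖x⋆‖₁ - ‖x_{t+1}‖₁) ≤ λ_t μ √s ‖h‖₂`. On the other hand
`b - x⋆ = (I - μ AᵀA)(x_t - x⋆) + μ Aᵀω`, where `h` and `x_t - x⋆` are both `2s`-sparse, so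
`⟨h, b - x⋆⟩ ≤ ‖h‖₂ (ρ_{2s,2s} Δ_t + ξ_{2s} μ δ)`. Adding the two,
`‖h‖₂ ≤ λ_t μ √s + ρ_{2s,2s} Δ_t + ξ_{2s} μ δ`, and by the choice of `λ_t` and the monotonicity
of `ρ` and `ξ` in the sparsity level the first term is at most `ρ_{2s,2s} Δ_t + ξ_{2s} μ δ`.
-/

open Matrix Filter Topology

section Vectors

variable {n : ℕ}

theorem dotp_eq_dotProduct (x y : Fin n → ℝ) : dotp x y = x ⬝ᵥ y := rfl

theorem l2norm_nonneg (x : Fin n → ℝ) : 0 ≤ l2norm x := Real.sqrt_nonneg _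

theorem l2norm_sq (x : Fin n → ℝ) : l2norm x ^ 2 = dotp x x := by
  rw [l2norm, Real.sq_sqrt (Finset.sum_nonneg fun i _ => sq_nonneg (x i))]
  simp only [dotp, sq]

theorem l2norm_eq_zero {x : Fin n → ℝ} : l2norm x = 0 ↔ x = 0 := by
  rw [← pow_eq_zero_iff two_ne_zero, l2norm_sq, dotp_eq_dotProduct, dotProduct_self_eq_zero]

theorem l2norm_pos {x : Fin n → ℝ} (hx : x ≠ 0) : 0 < l2norm x :=
  (l2norm_nonneg x).lt_of_ne (Ne.symm (mt l2norm_eq_zero.1 hx))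

theorem l2norm_smul (c : ℝ) (x : Fin n → ℝ) : l2norm (c • x) = |c| * l2norm x := by
  simp only [l2norm, Pi.smul_apply, smul_eq_mul, mul_pow]
  rw [← Finset.mul_sum, Real.sqrt_mul (sq_nonneg c), Real.sqrt_sq_eq_abs]

theorem l2norm_neg (x : Fin n → ℝ) : l2norm (-x) = l2norm x := by
  simp [l2norm]

theorem l2norm_add_smul_sq (p q : Fin n → ℝ) (t : ℝ) :
    l2norm (p + t • q) ^ 2 = l2norm p ^ 2 + 2 * t * dotp q p + t ^ 2 * l2norm q ^ 2 := by
  simp only [l2norm_sq, dotp_eq_dotProduct, dotProduct_add, add_dotProduct, dotProduct_smul,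
    smul_dotProduct, smul_eq_mul, dotProduct_comm p q]
  ring

theorem abs_apply_le_l2norm (x : Fin n → ℝ) (i : Fin n) : |x i| ≤ l2norm x :=
  Real.abs_le_sqrt (Finset.single_le_sum (fun j _ => sq_nonneg (x j)) (Finset.mem_univ i))

theorem continuous_l2norm : Continuous (l2norm : (Fin n → ℝ) → ℝ) := by
  unfold l2norm
  fun_prop

theorem isCompact_unitSphere : IsCompact (unitSphere n) := by
  refine Metric.isCompact_of_isClosed_isBounded (isClosed_eq continuous_l2norm continuous_const)
    ((Metric.isBounded_iff_subset_closedBall 0).2 ⟨1, fun x hx => ?_⟩)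
  refine mem_closedBall_zero_iff.2 ((pi_norm_le_iff_of_nonneg zero_le_one).2 fun i => ?_)
  rw [Real.norm_eq_abs]
  exact (abs_apply_le_l2norm x i).trans_eq hx

theorem suppF_smul_subset (c : ℝ) (x : Fin n → ℝ) : suppF (c • x) ⊆ suppF x := by
  intro i
  simp only [suppF, Finset.mem_filter, Finset.mem_univ, true_and, Pi.smul_apply, smul_eq_mul]
  exact right_ne_zero_of_mul

theorem l0_sub_le (x y : Fin n → ℝ) : l0 (x - y) ≤ (suppF x \ suppF y).card + l0 y := by
  refine (Finset.card_le_card fun i hi => ?_).trans (Finset.card_union_le _ _)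
  simp only [suppF, Finset.mem_filter, Finset.mem_univ, true_and, Pi.sub_apply,
    Finset.mem_union, Finset.mem_sdiff] at hi ⊢
  by_cases hy : y i = 0
  · exact Or.inl ⟨fun hx => hi (by rw [hx, hy, sub_zero]), not_not.2 hy⟩
  · exact Or.inr hy

theorem inv_l2norm_smul_mem {s : ℕ} {x : Fin n → ℝ} (hx : x ≠ 0) (hs : l0 x ≤ s) :
    (l2norm x)⁻¹ • x ∈ sparseSet n s ∩ unitSphere n := by
  have hpos := l2norm_pos hx
  refine ⟨(Finset.card_le_card (suppF_smul_subset _ x)).trans hs, ?_⟩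
  change l2norm _ = 1
  rw [l2norm_smul, abs_of_pos (inv_pos.2 hpos), inv_mul_cancel₀ hpos.ne']

theorem neg_mem_sparseSet_inter_unitSphere {s : ℕ} {x : Fin n → ℝ}
    (hx : x ∈ sparseSet n s ∩ unitSphere n) : -x ∈ sparseSet n s ∩ unitSphere n := by
  have hsupp : suppF (-x) = suppF x := by simp [suppF]
  exact ⟨by simpa [sparseSet, l0, hsupp] using hx.1, (l2norm_neg x).trans hx.2⟩

theorem sparseSet_inter_unitSphere_mono {s s' : ℕ} (hss' : s ≤ s') :
    sparseSet n s ∩ unitSphere n ⊆ sparseSet n s' ∩ unitSphere n :=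
  fun _ hx => ⟨hx.1.trans hss', hx.2⟩

theorem sum_abs_le_sqrt_card_mul_l2norm (S : Finset (Fin n)) (x : Fin n → ℝ) :
    ∑ i ∈ S, |x i| ≤ Real.sqrt S.card * l2norm x := by
  have hsq : ∑ i ∈ S, |x i| ^ 2 ≤ ∑ i, x i ^ 2 := by
    simp only [sq_abs]
    exact Finset.sum_le_sum_of_subset_of_nonneg (Finset.subset_univ S) fun i _ _ => sq_nonneg _
  calc ∑ i ∈ S, |x i| = ∑ i ∈ S, 1 * |x i| := by simp
    _ ≤ Real.sqrt (∑ _i ∈ S, 1 ^ 2) * Real.sqrt (∑ i ∈ S, |x i| ^ 2) :=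
        Real.sum_mul_le_sqrt_mul_sqrt S 1 fun i => |x i|
    _ ≤ Real.sqrt S.card * l2norm x := by
        simp only [one_pow, Finset.sum_const, nsmul_eq_mul, mul_one]
        exact mul_le_mul_of_nonneg_left (Real.sqrt_le_sqrt hsq) (Real.sqrt_nonneg _)

-- Only the coordinates in `supp x` can make `‖z‖₁` smaller than `‖x‖₁`.
theorem l1norm_sub_l1norm_le (x z : Fin n → ℝ) :
    l1norm x - l1norm z ≤ Real.sqrt (l0 x) * l2norm (z - x) := by
  have hx : l1norm x = ∑ i ∈ suppF x, |x i| :=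
    (Finset.sum_filter_of_ne fun i _ hi => abs_ne_zero.1 hi).symm
  have hz : ∑ i ∈ suppF x, |z i| ≤ l1norm z :=
    Finset.sum_le_sum_of_subset_of_nonneg (Finset.subset_univ _) fun i _ _ => abs_nonneg _
  have hdiff : ∑ i ∈ suppF x, (|x i| - |z i|) ≤ ∑ i ∈ suppF x, |(z - x) i| :=
    Finset.sum_le_sum fun i _ => by
      rw [Pi.sub_apply, abs_sub_comm]
      exact abs_sub_abs_le_abs_sub _ _
  have hcs : ∑ i ∈ suppF x, |(z - x) i| ≤ Real.sqrt (l0 x) * l2norm (z - x) :=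
    sum_abs_le_sqrt_card_mul_l2norm _ _
  rw [Finset.sum_sub_distrib, ← hx] at hdiff
  linarith

theorem convexOn_l1norm : ConvexOn ℝ Set.univ (l1norm : (Fin n → ℝ) → ℝ) := by
  refine ⟨convex_univ, fun x _ z _ a b ha hb _ => ?_⟩
  simp only [l1norm, smul_eq_mul, Finset.mul_sum, ← Finset.sum_add_distrib]
  refine Finset.sum_le_sum fun i _ => ?_
  calc |(a • x + b • z) i| ≤ |a * x i| + |b * z i| := abs_add_le _ _
    _ = a * |x i| + b * |z i| := by rw [abs_mul, abs_mul, abs_of_nonneg ha, abs_of_nonneg hb]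

end Vectors

section SupremumOfSymmetricSet

-- `sSup` of an empty or unbounded set of reals is `0`.
theorem sSup_nonneg_of_neg_mem {S : Set ℝ} (hS : ∀ t ∈ S, -t ∈ S) : 0 ≤ sSup S := by
  rcases S.eq_empty_or_nonempty with rfl | ⟨t, ht⟩
  · exact Real.sSup_empty.ge
  · rcases le_total 0 t with h | h
    · exact Real.sSup_nonneg' ⟨t, ht, h⟩
    · exact Real.sSup_nonneg' ⟨-t, hS t ht, neg_nonneg.2 h⟩

theorem csSup_le_csSup_of_neg_mem {S T : Set ℝ} (hT : BddAbove T) (hTneg : ∀ t ∈ T, -t ∈ T)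
    (hST : S ⊆ T) : sSup S ≤ sSup T := by
  rcases S.eq_empty_or_nonempty with rfl | hS
  · exact Real.sSup_empty.trans_le (sSup_nonneg_of_neg_mem hTneg)
  · exact csSup_le_csSup hT hS hST

end SupremumOfSymmetricSet

section RestrictedSingularValues

variable {m n : ℕ} (A : Fin m → Fin n → ℝ)

theorem mvec_smul (c : ℝ) (x : Fin n → ℝ) : mvec A (c • x) = c • mvec A x :=
  mulVec_smul (M := A) c x

theorem tmvec_smul (c : ℝ) (y : Fin m → ℝ) : tmvec A (c • y) = c • tmvec A y :=
  mulVec_smul (M := (of A)ᵀ) c y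

theorem bddAbove_rsRho_set (μ : ℝ) {P Q : Set (Fin n → ℝ)} (hP : P ⊆ unitSphere n)
    (hQ : Q ⊆ unitSphere n) :
    BddAbove {t | ∃ v ∈ P, ∃ u ∈ Q, t = dotp v (u - μ • tmvec A (mvec A u))} := by
  have hcont : Continuous fun p : (Fin n → ℝ) × (Fin n → ℝ) =>
      dotp p.1 (p.2 - μ • tmvec A (mvec A p.2)) := by
    unfold tmvec mvec dotp
    fun_prop
  refine ((isCompact_unitSphere.prod isCompact_unitSphere).bddAbove_image
    hcont.continuousOn).mono ?_
  rintro t ⟨v, hv, u, hu, rfl⟩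
  exact ⟨(v, u), ⟨hP hv, hQ hu⟩, rfl⟩

theorem bddAbove_dotp_set (z : Fin n → ℝ) {P : Set (Fin n → ℝ)} (hP : P ⊆ unitSphere n) :
    BddAbove {t | ∃ v ∈ P, t = dotp v z} := by
  have hcont : Continuous fun v : Fin n → ℝ => dotp v z := by
    unfold dotp
    fun_prop
  refine (isCompact_unitSphere.bddAbove_image hcont.continuousOn).mono ?_
  rintro t ⟨v, hv, rfl⟩
  exact ⟨v, hP hv, rfl⟩

theorem neg_mem_rsRho_set {μ : ℝ} {P Q : Set (Fin n → ℝ)} (hP : ∀ v ∈ P, -v ∈ P) :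
    ∀ t ∈ {t | ∃ v ∈ P, ∃ u ∈ Q, t = dotp v (u - μ • tmvec A (mvec A u))},
      -t ∈ {t | ∃ v ∈ P, ∃ u ∈ Q, t = dotp v (u - μ • tmvec A (mvec A u))} := by
  rintro t ⟨v, hv, u, hu, rfl⟩
  exact ⟨-v, hP v hv, u, hu, (neg_dotProduct _ _).symm⟩

theorem neg_mem_dotp_set {z : Fin n → ℝ} {P : Set (Fin n → ℝ)} (hP : ∀ v ∈ P, -v ∈ P) :
    ∀ t ∈ {t | ∃ v ∈ P, t = dotp v z}, -t ∈ {t | ∃ v ∈ P, t = dotp v z} := by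
  rintro t ⟨v, hv, rfl⟩
  exact ⟨-v, hP v hv, (neg_dotProduct _ _).symm⟩

theorem rsRho_nonneg {μ : ℝ} {P Q : Set (Fin n → ℝ)} (hP : ∀ v ∈ P, -v ∈ P) :
    0 ≤ rsRho A μ P Q :=
  sSup_nonneg_of_neg_mem (neg_mem_rsRho_set A hP)

theorem rsXi_nonneg {w : Fin m → ℝ} {P : Set (Fin n → ℝ)} (hP : ∀ v ∈ P, -v ∈ P) :
    0 ≤ rsXi A w P :=
  sSup_nonneg_of_neg_mem (neg_mem_dotp_set hP)

theorem rsRho_mono_left {μ : ℝ} {P P' Q : Set (Fin n → ℝ)} (hP' : P' ⊆ unitSphere n)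
    (hQ : Q ⊆ unitSphere n) (hneg : ∀ v ∈ P', -v ∈ P') (hPP' : P ⊆ P') :
    rsRho A μ P Q ≤ rsRho A μ P' Q := by
  refine csSup_le_csSup_of_neg_mem (bddAbove_rsRho_set A μ hP' hQ)
    (neg_mem_rsRho_set A hneg) ?_
  rintro t ⟨v, hv, u, hu, rfl⟩
  exact ⟨v, hPP' hv, u, hu, rfl⟩

theorem rsXi_mono {w : Fin m → ℝ} {P P' : Set (Fin n → ℝ)} (hP' : P' ⊆ unitSphere n)
    (hneg : ∀ v ∈ P', -v ∈ P') (hPP' : P ⊆ P') : rsXi A w P ≤ rsXi A w P' := by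
  refine csSup_le_csSup_of_neg_mem (bddAbove_dotp_set _ hP') (neg_mem_dotp_set hneg) ?_
  rintro t ⟨v, hv, rfl⟩
  exact ⟨v, hPP' hv, rfl⟩

theorem rsRho_sparse_nonneg (μ : ℝ) (a b : ℕ) :
    0 ≤ rsRho A μ (sparseSet n a ∩ unitSphere n) (sparseSet n b ∩ unitSphere n) :=
  rsRho_nonneg A fun _ => neg_mem_sparseSet_inter_unitSphere

theorem rsXi_sparse_nonneg (w : Fin m → ℝ) (a : ℕ) :
    0 ≤ rsXi A w (sparseSet n a ∩ unitSphere n) :=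
  rsXi_nonneg A fun _ => neg_mem_sparseSet_inter_unitSphere

theorem rsRho_sparse_mono_left (μ : ℝ) {a a' : ℕ} (b : ℕ) (haa' : a ≤ a') :
    rsRho A μ (sparseSet n a ∩ unitSphere n) (sparseSet n b ∩ unitSphere n) ≤
      rsRho A μ (sparseSet n a' ∩ unitSphere n) (sparseSet n b ∩ unitSphere n) :=
  rsRho_mono_left A Set.inter_subset_right Set.inter_subset_right
    (fun _ => neg_mem_sparseSet_inter_unitSphere) (sparseSet_inter_unitSphere_mono haa')

theorem rsXi_sparse_mono (w : Fin m → ℝ) {a a' : ℕ} (haa' : a ≤ a') :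
    rsXi A w (sparseSet n a ∩ unitSphere n) ≤ rsXi A w (sparseSet n a' ∩ unitSphere n) :=
  rsXi_mono A Set.inter_subset_right (fun _ => neg_mem_sparseSet_inter_unitSphere)
    (sparseSet_inter_unitSphere_mono haa')

theorem dotp_le_rsRho_mul {μ : ℝ} {a b : ℕ} {h u : Fin n → ℝ} (hh : l0 h ≤ a)
    (hu : l0 u ≤ b) :
    dotp h (u - μ • tmvec A (mvec A u)) ≤
      rsRho A μ (sparseSet n a ∩ unitSphere n) (sparseSet n b ∩ unitSphere n) *
        (l2norm h * l2norm u) := by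
  rcases eq_or_ne h 0 with rfl | hh0
  · simp [dotp, l2norm_eq_zero.2]
  rcases eq_or_ne u 0 with rfl | hu0
  · simp [dotp, mvec, tmvec, l2norm_eq_zero.2]
  have hpos : 0 < l2norm h * l2norm u := mul_pos (l2norm_pos hh0) (l2norm_pos hu0)
  have hle := le_csSup (bddAbove_rsRho_set A μ Set.inter_subset_right Set.inter_subset_right)
    ⟨_, inv_l2norm_smul_mem hh0 hh, _, inv_l2norm_smul_mem hu0 hu, rfl⟩
  have hval : dotp ((l2norm h)⁻¹ • h)
      ((l2norm u)⁻¹ • u - μ • tmvec A (mvec A ((l2norm u)⁻¹ • u))) =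
        (l2norm h * l2norm u)⁻¹ * dotp h (u - μ • tmvec A (mvec A u)) := by
    rw [mvec_smul, tmvec_smul, smul_comm μ, ← smul_sub, dotp_eq_dotProduct, smul_dotProduct,
      dotProduct_smul, smul_eq_mul, smul_eq_mul, mul_inv, dotp_eq_dotProduct, mul_assoc]
  rw [hval, inv_mul_le_iff₀ hpos] at hle
  exact hle.trans_eq (mul_comm _ _)

theorem dotp_le_rsXi_mul {w : Fin m → ℝ} {a : ℕ} {h : Fin n → ℝ} (hh : l0 h ≤ a) :
    dotp h (tmvec A w) ≤ rsXi A w (sparseSet n a ∩ unitSphere n) * (l2norm h * l2norm w) := by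
  rcases eq_or_ne h 0 with rfl | hh0
  · simp [dotp, l2norm_eq_zero.2]
  rcases eq_or_ne w 0 with rfl | hw0
  · simp [dotp, tmvec, l2norm_eq_zero.2]
  have hpos : 0 < l2norm h * l2norm w := mul_pos (l2norm_pos hh0) (l2norm_pos hw0)
  have hle := le_csSup (bddAbove_dotp_set (tmvec A ((l2norm w)⁻¹ • w)) Set.inter_subset_right)
    ⟨_, inv_l2norm_smul_mem hh0 hh, rfl⟩
  have hval : dotp ((l2norm h)⁻¹ • h) (tmvec A ((l2norm w)⁻¹ • w)) =
      (l2norm h * l2norm w)⁻¹ * dotp h (tmvec A w) := by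
    rw [tmvec_smul, dotp_eq_dotProduct, smul_dotProduct, dotProduct_smul, smul_eq_mul,
      smul_eq_mul, mul_inv, dotp_eq_dotProduct, mul_assoc]
  rw [hval, inv_mul_le_iff₀ hpos] at hle
  exact hle.trans_eq (mul_comm _ _)

end RestrictedSingularValues

section ProximalGradientStep

variable {m n : ℕ}

def IsProxPoint (g : (Fin n → ℝ) → ℝ) (b xp : Fin n → ℝ) : Prop :=
  ∀ z, g xp + 1 / 2 * l2norm (xp - b) ^ 2 ≤ g z + 1 / 2 * l2norm (z - b) ^ 2

def gradStep (A : Fin m → Fin n → ℝ) (y : Fin m → ℝ) (μ : ℝ) (x : Fin n → ℝ) : Fin n → ℝ :=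
  x - μ • tmvec A (mvec A x - y)

theorem nonpos_of_forall_le_mul {a c : ℝ} (h : ∀ t : ℝ, 0 < t → t ≤ 1 → a ≤ t * c) : a ≤ 0 := by
  have hlim : Tendsto (fun t : ℝ => t * c) (𝓝[>] 0) (𝓝 0) := by
    simpa using ((continuous_mul_const c).tendsto 0).mono_left nhdsWithin_le_nhds
  refine ge_of_tendsto hlim ?_
  filter_upwards [Ioo_mem_nhdsGT one_pos] with t ht using h t ht.1 ht.2.le

theorem IsProxPoint.dotp_sub_le {g : (Fin n → ℝ) → ℝ} {b xp : Fin n → ℝ}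
    (hxp : IsProxPoint g b xp) (hg : ConvexOn ℝ Set.univ g) (x : Fin n → ℝ) :
    dotp (xp - x) (xp - b) ≤ g x - g xp := by
  have hneg : dotp (xp - x) (xp - b) = -dotp (x - xp) (xp - b) := by
    rw [← neg_sub, dotp_eq_dotProduct, neg_dotProduct, dotp_eq_dotProduct]
  suffices dotp (xp - x) (xp - b) - (g x - g xp) ≤ 0 by linarith
  refine nonpos_of_forall_le_mul (c := l2norm (x - xp) ^ 2 / 2) fun t ht ht1 => ?_
  have hconv : g ((1 - t) • xp + t • x) ≤ (1 - t) * g xp + t * g x :=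
    hg.2 trivial trivial (by linarith) ht.le (by ring)
  have hseg : (1 - t) • xp + t • x - b = (xp - b) + t • (x - xp) := by module
  have hz := hxp ((1 - t) • xp + t • x)
  rw [hseg, l2norm_add_smul_sq] at hz
  have key : t * (dotp (xp - x) (xp - b) - (g x - g xp)) ≤
      t * (t * (l2norm (x - xp) ^ 2 / 2)) := by
    rw [hneg]
    linarith
  exact le_of_mul_le_mul_left key ht

variable (A : Fin m → Fin n → ℝ) (w : Fin m → ℝ)

theorem gradStep_sub_eq (μ : ℝ) (xt xstar : Fin n → ℝ) :
    gradStep A (mvec A xstar + w) μ xt - xstar =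
      (xt - xstar - μ • tmvec A (mvec A (xt - xstar))) + μ • tmvec A w := by
  funext j
  simp only [gradStep, tmvec, mvec, dotp, Pi.add_apply, Pi.sub_apply, Pi.smul_apply, smul_eq_mul,
    mul_sub, mul_add, Finset.sum_sub_distrib, Finset.sum_add_distrib]
  ring

theorem dotp_gradStep_sub_le {μ : ℝ} (hμ : 0 ≤ μ) {a : ℕ} {h xt xstar : Fin n → ℝ}
    (hh : l0 h ≤ a) (hu : l0 (xt - xstar) ≤ a) :
    dotp h (gradStep A (mvec A xstar + w) μ xt - xstar) ≤
      l2norm h * (rsRho A μ (sparseSet n a ∩ unitSphere n) (sparseSet n a ∩ unitSphere n) *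
        l2norm (xt - xstar) + rsXi A w (sparseSet n a ∩ unitSphere n) * μ * l2norm w) := by
  rw [gradStep_sub_eq, dotp_eq_dotProduct, dotProduct_add, dotProduct_smul, smul_eq_mul]
  have hρ := dotp_le_rsRho_mul A (μ := μ) hh hu
  have hξ := mul_le_mul_of_nonneg_left (dotp_le_rsXi_mul A (w := w) hh) hμ
  rw [dotp_eq_dotProduct] at hρ hξ
  linarith

theorem IsProxPoint.l2norm_sub_le_of_gradStep {lam μ : ℝ} (hlam : 0 ≤ lam) (hμ : 0 ≤ μ)
    {a : ℕ} {xt xnext xstar : Fin n → ℝ}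
    (hxnext : IsProxPoint (fun z => lam * μ * l1norm z) (gradStep A (mvec A xstar + w) μ xt) xnext)
    (hh : l0 (xnext - xstar) ≤ a) (hu : l0 (xt - xstar) ≤ a) :
    l2norm (xnext - xstar) ≤ lam * μ * Real.sqrt (l0 xstar) +
      rsRho A μ (sparseSet n a ∩ unitSphere n) (sparseSet n a ∩ unitSphere n) *
        l2norm (xt - xstar) + rsXi A w (sparseSet n a ∩ unitSphere n) * μ * l2norm w := by
  set b := gradStep A (mvec A xstar + w) μ xt
  have hg : ConvexOn ℝ Set.univ fun z : Fin n → ℝ => lam * μ * l1norm z := by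
    simpa only [smul_eq_mul] using convexOn_l1norm.smul (mul_nonneg hlam hμ)
  have hprox := hxnext.dotp_sub_le hg xstar
  have hl1 := mul_le_mul_of_nonneg_left (l1norm_sub_l1norm_le xstar xnext) (mul_nonneg hlam hμ)
  have hgrad := dotp_gradStep_sub_le A w hμ (h := xnext - xstar) hh hu
  have hsplit : l2norm (xnext - xstar) ^ 2 =
      dotp (xnext - xstar) (xnext - b) + dotp (xnext - xstar) (b - xstar) := by
    simp only [l2norm_sq, dotp_eq_dotProduct, ← dotProduct_add, sub_add_sub_cancel]
  have hρ := rsRho_sparse_nonneg A μ a a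
  have hξ := rsXi_sparse_nonneg A w a
  rcases (l2norm_nonneg (xnext - xstar)).eq_or_lt with h0 | hpos
  · rw [← h0]
    have := l2norm_nonneg (xt - xstar)
    have := l2norm_nonneg w
    positivity
  · refine le_of_mul_le_mul_left ?_ hpos
    rw [← sq, hsplit]
    linarith

end ProximalGradientStep

/-- One-step deterministic contraction, sparse case.
If both `x_t` and the proximal-gradient homotopy update `x_{t+1}` have fewer than `s` nonzero
entries outside `supp(x⋆)`, `‖x_t - x⋆‖₂ ≤ Δ_t`, and
`λ_t = (ξ_s δ + ρ_{s,2s} Δ_t/μ)/√s`, then `‖x_{t+1} - x⋆‖₂ ≤ 2 ρ_{2s,2s} Δ_t + 2 ξ_{2s} μ δ`. -/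
theorem stmt2 {m n : ℕ} (A : Fin m → Fin n → ℝ) (w : Fin m → ℝ) (δ : ℝ)
    (xstar : Fin n → ℝ) (s : ℕ) (μ Δt lamt : ℝ) (xt xnext : Fin n → ℝ)
    (y : Fin m → ℝ) (hy : y = mvec A xstar + w)
    (hxs : l0 xstar ≤ s) (hw : l2norm w ≤ δ) (hμ : 0 < μ)
    (hsuppt : (suppF xt \ suppF xstar).card < s)
    (hsuppt1 : (suppF xnext \ suppF xstar).card < s)
    (hΔ : l2norm (xt - xstar) ≤ Δt)
    (hlam : lamt = (rsXi A w (sparseSet n s ∩ unitSphere n) * δ +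
        rsRho A μ (sparseSet n s ∩ unitSphere n) (sparseSet n (2 * s) ∩ unitSphere n) * Δt / μ)
        / Real.sqrt s)
    (hmin : ∀ z : Fin n → ℝ,
        lamt * μ * l1norm xnext + (1 / 2) * l2norm (xnext - (xt - μ • tmvec A (mvec A xt - y))) ^ 2 ≤
        lamt * μ * l1norm z + (1 / 2) * l2norm (z - (xt - μ • tmvec A (mvec A xt - y))) ^ 2) :
    l2norm (xnext - xstar) ≤
      2 * rsRho A μ (sparseSet n (2 * s) ∩ unitSphere n) (sparseSet n (2 * s) ∩ unitSphere n) * Δt +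
      2 * rsXi A w (sparseSet n (2 * s) ∩ unitSphere n) * μ * δ := by
  subst hy
  have hs : (0 : ℝ) < s := by exact_mod_cast (Nat.zero_le _).trans_lt hsuppt
  have hh : l0 (xnext - xstar) ≤ 2 * s := by have := l0_sub_le xnext xstar; omega
  have hu : l0 (xt - xstar) ≤ 2 * s := by have := l0_sub_le xt xstar; omega
  have hρ := rsRho_sparse_mono_left A μ (2 * s) (show s ≤ 2 * s by omega)
  have hξ := rsXi_sparse_mono A w (show s ≤ 2 * s by omega)
  have := rsRho_sparse_nonneg A μ s (2 * s)
  have := rsXi_sparse_nonneg A w s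
  have := rsRho_sparse_nonneg A μ (2 * s) (2 * s)
  have := rsXi_sparse_nonneg A w (2 * s)
  have hδ := (l2norm_nonneg w).trans hw
  have hΔ0 := (l2norm_nonneg _).trans hΔ
  have hlam0 : 0 ≤ lamt := hlam ▸ by positivity
  set ρ := rsRho A μ (sparseSet n (2 * s) ∩ unitSphere n) (sparseSet n (2 * s) ∩ unitSphere n)
  set ξ := rsXi A w (sparseSet n (2 * s) ∩ unitSphere n)
  calc l2norm (xnext - xstar)
      ≤ lamt * μ * Real.sqrt (l0 xstar) + ρ * l2norm (xt - xstar) + ξ * μ * l2norm w :=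
        IsProxPoint.l2norm_sub_le_of_gradStep A w hlam0 hμ.le hmin hh hu
    _ ≤ lamt * μ * Real.sqrt s + ρ * Δt + ξ * μ * δ := by gcongr
    _ = rsXi A w (sparseSet n s ∩ unitSphere n) * μ * δ +
          rsRho A μ (sparseSet n s ∩ unitSphere n) (sparseSet n (2 * s) ∩ unitSphere n) * Δt +
          ρ * Δt + ξ * μ * δ := by
        rw [hlam]
        field_simp
    _ ≤ 2 * ρ * Δt + 2 * ξ * μ * δ := by
        have := mul_le_mul_of_nonneg_right hξ (mul_nonneg hμ.le hδ)
        have := mul_le_mul_of_nonneg_right hρ hΔ0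
        linarith
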